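/- In the setting of the Walsh transport model (H = (ℂ⁴)^{⊗k}, U, Π's, t_n as above), let ε = (0, ε₂,...,ε_k) with ε_ℓ ∈ {1,2} for all 2 ≤ ℓ ≤ k (a nonclassical state). Then t_n|ε⟩ = 0 for all 1 ≤ n ≤ k-1, and for every 0 ≤ m ≤ k-1 one has ‖t_{k+m}|ε⟩‖² = 1/(4·2^m). -/

import Mathlib

/-!
Simple tensors stay simple under `U` and under the projections, which only touch the first
qu4it, so `t_n|ε⟩` is a simple tensor and the theorem is bookkeeping of `k` qu4its. After `r`
steps slot `i` holds cell `i + r` of a tape whose cells `j < k` are `e_{ε_j}`, whose cells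
`k ≤ j < 2k` are `F₄* e_{ε_j}` and whose later cells are `F₄* Π_I F₄* e_{ε_j}` (indices mod `k`):
each `U` moves the window one cell along the tape, `Π_{L₁}` (time `0`) and `Π_I` (later times)
act trivially on the first qu4it while it is still some `e_{ε_j}`, and in the second round `U`
feeds back `F₄* Π_I F₄* e_{ε_j}`. For `n < k` the first qu4it of `t_n|ε⟩` is `Π₃ e_{ε_n} = 0`,
as `ε_n ∈ {1, 2}`. For `n = k + m` the squared norm is the product over the slots:
`‖π₃ F₄* e‖² = 1/4` for the first, `1` for the `k - 1 - m` slots holding `F₄* e`, and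
`‖π_I F₄* e‖² = 1/2` for the `m` slots holding `F₄* Π_I F₄* e`, since `F₄` is unitary.
-/

open Complex

/-- the 4×4 discrete Fourier transform. -/
noncomputable def F4 : Matrix (Fin 4) (Fin 4) ℂ :=
  fun a b => (1 / 2 : ℂ) *
    Complex.exp (-(2 * Real.pi * Complex.I * ((a : ℕ) : ℂ) * ((b : ℕ) : ℂ)) / 4)

/-- the identification of `ℂ^{4^k}` with `(ℂ⁴)^{⊗ k}`: the simple tensor
`v 0 ⊗ ⋯ ⊗ v (k-1)` corresponds to this vector. -/
noncomputable def tens4 (k : ℕ) (v : Fin k → Fin 4 → ℂ) : Fin (4 ^ k) → ℂ :=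
  fun j => ∏ i : Fin k,
    v i ⟨j.val / 4 ^ (k - 1 - i.val) % 4, Nat.mod_lt _ (by norm_num)⟩

/-- the orthogonal projection onto the positions whose most significant base-4 digit
lies in `s` (acting only on the first qu4it). -/
noncomputable def projDigit (k : ℕ) (s : Finset (Fin 4)) :
    Matrix (Fin (4 ^ k)) (Fin (4 ^ k)) ℂ :=
  Matrix.diagonal fun j =>
    if (⟨j.val / 4 ^ (k - 1) % 4, Nat.mod_lt _ (by norm_num)⟩ : Fin 4) ∈ s then 1 else 0

open Matrix Fin.NatCast

lemma sum_norm_sq_mulVec_of_mem_unitaryGroup {𝕜 ι : Type*} [RCLike 𝕜] [Fintype ι] [DecidableEq ι]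
    {A : Matrix ι ι 𝕜} (hA : A ∈ unitaryGroup ι 𝕜) (x : ι → 𝕜) :
    ∑ a, ‖(A *ᵥ x) a‖ ^ 2 = ∑ a, ‖x a‖ ^ 2 := by
  have h := ContinuousLinearMap.norm_map_of_mem_unitary
    (Unitary.map_mem (toEuclideanCLM (n := ι) (𝕜 := 𝕜)) hA) (WithLp.toLp 2 x)
  rwa [toEuclideanCLM_toLp, ← sq_eq_sq₀ (norm_nonneg _) (norm_nonneg _),
    EuclideanSpace.norm_sq_eq, EuclideanSpace.norm_sq_eq] at h

lemma indicator_single_of_mem {ι M : Type*} [DecidableEq ι] [Zero M] {s : Set ι} {j : ι}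
    (h : j ∈ s) (c : M) : s.indicator (Pi.single j c) = Pi.single j c :=
  Set.indicator_eq_self.2 (Pi.support_single_subset.trans (Set.singleton_subset_iff.2 h))

lemma indicator_single_of_notMem {ι M : Type*} [DecidableEq ι] [Zero M] {s : Set ι} {j : ι}
    (h : j ∉ s) (c : M) : s.indicator (Pi.single j c) = 0 :=
  Set.indicator_eq_zero.2
    (Set.disjoint_of_subset_left Pi.support_single_subset (Set.disjoint_singleton_left.2 h))

lemma F4_apply (a b : Fin 4) : F4 a b = 1 / 2 * (-I) ^ ((a : ℕ) * b) := by
  have h : Complex.exp (-(2 * Real.pi * I * ((a : ℕ) : ℂ) * ((b : ℕ) : ℂ)) / 4)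
      = Complex.exp (-(Real.pi / 2 : ℝ) * I) ^ ((a : ℕ) * b) := by
    rw [← Complex.exp_nat_mul]
    push_cast
    ring_nf
  rw [F4, h, Complex.exp_mul_I]
  simp

lemma conjTranspose_F4_apply (a b : Fin 4) : F4ᴴ a b = 1 / 2 * I ^ ((a : ℕ) * b) := by
  simp [conjTranspose_apply, F4_apply, mul_comm (b : ℕ)]

lemma F4_mem_unitaryGroup : F4 ∈ unitaryGroup (Fin 4) ℂ := by
  rw [mem_unitaryGroup_iff, star_eq_conjTranspose]
  ext a b
  fin_cases a <;> fin_cases b <;>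
    simp [mul_apply, Fin.sum_univ_four, F4_apply] <;> ring_nf <;> simp [pow_succ] <;> ring_nf

lemma conjTranspose_F4_mem_unitaryGroup : F4ᴴ ∈ unitaryGroup (Fin 4) ℂ := by
  rw [← star_eq_conjTranspose]
  exact Unitary.star_mem F4_mem_unitaryGroup

lemma norm_conjTranspose_F4_mulVec_single (j a : Fin 4) : ‖(F4ᴴ *ᵥ Pi.single j 1) a‖ = 1 / 2 := by
  rw [mulVec_single_one, col_apply, conjTranspose_F4_apply]
  simp

lemma sum_norm_sq_indicator_conjTranspose_F4_mulVec_single (s : Finset (Fin 4)) (j : Fin 4) :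
    ∑ a, ‖(s : Set (Fin 4)).indicator (F4ᴴ *ᵥ Pi.single j 1) a‖ ^ 2 = s.card / 4 := by
  have h (a : Fin 4) : ‖(s : Set (Fin 4)).indicator (F4ᴴ *ᵥ Pi.single j 1) a‖ ^ 2
      = if a ∈ s then 1 / 4 else 0 := by
    simp only [Set.indicator_apply, Finset.mem_coe]
    split_ifs
    · rw [norm_conjTranspose_F4_mulVec_single]
      norm_num
    · simp
  simp only [h, Fintype.sum_ite_mem, Finset.sum_const, nsmul_eq_mul]
  ring

lemma tens4_apply_eq_prod_digits (k : ℕ) (v : Fin k → Fin 4 → ℂ) (j : Fin (4 ^ k)) :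
    tens4 k v j = ∏ i : Fin k, v i (finFunctionFinEquiv.symm j i.rev) := by
  refine Finset.prod_congr rfl fun i _ => congrArg (v i) (Fin.ext ?_)
  simp only [finFunctionFinEquiv_symm_apply_val, Fin.val_rev]
  congr 3
  omega

lemma sum_norm_sq_tens4 (k : ℕ) (v : Fin k → Fin 4 → ℂ) :
    ∑ j, ‖tens4 k v j‖ ^ 2 = ∏ i : Fin k, ∑ a, ‖v i a‖ ^ 2 := by
  have hj (j : Fin (4 ^ k)) : ‖tens4 k v j‖ ^ 2
      = ∏ i : Fin k, ‖v i.rev (finFunctionFinEquiv.symm j i)‖ ^ 2 := by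
    rw [tens4_apply_eq_prod_digits, norm_prod, ← Finset.prod_pow,
      ← Equiv.prod_comp Fin.revPerm]
    simp
  simp_rw [hj]
  rw [Equiv.sum_comp finFunctionFinEquiv.symm (fun d => ∏ i : Fin k, ‖v i.rev (d i)‖ ^ 2),
    ← Equiv.prod_comp Fin.revPerm (fun i => ∑ a, ‖v i a‖ ^ 2), Finset.prod_univ_sum,
    Fintype.piFinset_univ]
  simp

lemma tens4_eq_zero_of_eq_zero (k : ℕ) (v : Fin k → Fin 4 → ℂ) (i : Fin k) (h : v i = 0) :
    tens4 k v = 0 :=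
  funext fun _ => Finset.prod_eq_zero (Finset.mem_univ i) (by rw [h]; rfl)

noncomputable def projHead (k : ℕ) (s : Finset (Fin 4)) (v : Fin k → Fin 4 → ℂ) :
    Fin k → Fin 4 → ℂ :=
  fun i => if (i : ℕ) = 0 then (s : Set (Fin 4)).indicator (v i) else v i

lemma projDigit_mulVec_tens4 (k : ℕ) (hk : 1 ≤ k) (s : Finset (Fin 4)) (v : Fin k → Fin 4 → ℂ) :
    projDigit k s *ᵥ tens4 k v = tens4 k (projHead k s v) := by
  obtain ⟨k, rfl⟩ : ∃ k', k = k' + 1 := ⟨k - 1, by omega⟩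
  funext j
  simp only [projDigit, mulVec_diagonal, tens4, projHead, Fin.prod_univ_succ, Fin.val_zero,
    Fin.val_succ, Nat.add_one_ne_zero, if_false, ← mul_assoc]
  congr 1
  simp only [↓reduceIte, Nat.add_sub_cancel, Nat.sub_zero, Set.indicator_apply, Finset.mem_coe]
  split_ifs <;> simp

noncomputable def walshShift (k : ℕ) (v : Fin k → Fin 4 → ℂ) : Fin k → Fin 4 → ℂ :=
  fun i => if h : i.val + 1 < k then v ⟨i.val + 1, h⟩ else F4ᴴ *ᵥ v ⟨0, i.pos⟩

def window (k : ℕ) (w : ℕ → Fin 4 → ℂ) (r : ℕ) : Fin k → Fin 4 → ℂ :=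
  fun i => w (i + r)

lemma walshShift_projHead_window (k : ℕ) (s : Finset (Fin 4)) (w : ℕ → Fin 4 → ℂ) (r : ℕ)
    (h : w (r + k) = F4ᴴ *ᵥ (s : Set (Fin 4)).indicator (w r)) :
    walshShift k (projHead k s (window k w r)) = window k w (r + 1) := by
  funext i
  by_cases hi : (i : ℕ) + 1 < k
  · simp only [walshShift, projHead, window, dif_pos hi, Nat.add_one_ne_zero, if_false]
    rw [add_right_comm, add_assoc]
  · simp only [walshShift, projHead, window, dif_neg hi, zero_add, if_true, ← h]
    congr 1
    omega

section Dynamics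

variable {k : ℕ} {U : Matrix (Fin (4 ^ k)) (Fin (4 ^ k)) ℂ}

lemma pow_mulVec_tens4_projHead_window (hk : 1 ≤ k)
    (hU : ∀ v, U *ᵥ tens4 k v = tens4 k (walshShift k v))
    (S : ℕ → Finset (Fin 4)) (s : Finset (Fin 4)) (hS : ∀ r, S (r + 1) = s)
    (w : ℕ → Fin 4 → ℂ) (n : ℕ)
    (hw : ∀ r < n, w (r + k) = F4ᴴ *ᵥ (S r : Set (Fin 4)).indicator (w r)) :
    (projDigit k s * U) ^ n *ᵥ tens4 k (projHead k (S 0) (window k w 0))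
      = tens4 k (projHead k (S n) (window k w n)) := by
  induction n with
  | zero => rw [pow_zero, one_mulVec]
  | succ n ih =>
    rw [pow_succ', ← mulVec_mulVec, ih fun r hr => hw r (by omega), ← mulVec_mulVec, hU,
      walshShift_projHead_window k _ w n (hw n (by omega)), projDigit_mulVec_tens4 k hk, hS]

lemma mulVec_tens4_window_eq_tens4_projHead (hk : 1 ≤ k)
    (hU : ∀ v, U *ᵥ tens4 k v = tens4 k (walshShift k v))
    (S : ℕ → Finset (Fin 4)) (s s' : Finset (Fin 4)) (hS : ∀ r, S (r + 1) = s)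
    (w : ℕ → Fin 4 → ℂ) (n : ℕ) (hn : 1 ≤ n)
    (hw : ∀ r < n, w (r + k) = F4ᴴ *ᵥ (S r : Set (Fin 4)).indicator (w r)) :
    (projDigit k s' * U * (projDigit k s * U) ^ (n - 1) * projDigit k (S 0)) *ᵥ
        tens4 k (window k w 0)
      = tens4 k (projHead k s' (window k w n)) := by
  obtain ⟨n, rfl⟩ : ∃ n', n = n' + 1 := ⟨n - 1, by omega⟩
  simp only [← mulVec_mulVec, Nat.add_sub_cancel]
  rw [projDigit_mulVec_tens4 k hk,
    pow_mulVec_tens4_projHead_window hk hU S s hS w n fun r hr => hw r (by omega), hU,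
    walshShift_projHead_window k _ w n (hw n (by omega)), projDigit_mulVec_tens4 k hk]

end Dynamics

def walshProj (r : ℕ) : Finset (Fin 4) :=
  if r = 0 then {0} else {1, 2}

noncomputable def walshTape (k : ℕ) [NeZero k] (εs : Fin k → Fin 4) (j : ℕ) : Fin 4 → ℂ :=
  if j < k then Pi.single (εs j) 1
  else if j < 2 * k then F4ᴴ *ᵥ Pi.single (εs j) 1
  else F4ᴴ *ᵥ (({1, 2} : Finset (Fin 4)) : Set (Fin 4)).indicator (F4ᴴ *ᵥ Pi.single (εs j) 1)

section Tape

variable {k : ℕ} [NeZero k] (εs : Fin k → Fin 4)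

lemma window_walshTape_zero : window k (walshTape k εs) 0 = fun i => Pi.single (εs i) 1 := by
  funext i
  simp [window, walshTape]

lemma walshTape_add_right (hε0 : εs 0 = 0) (hnc : ∀ i, i ≠ 0 → εs i = 1 ∨ εs i = 2)
    {r : ℕ} (hr : r < 2 * k) :
    walshTape k εs (r + k) = F4ᴴ *ᵥ (walshProj r : Set (Fin 4)).indicator (walshTape k εs r) := by
  have hcast : ((r + k : ℕ) : Fin k) = r := by simp
  by_cases hrk : r < k
  · have hmem : εs r ∈ walshProj r := by
      rcases Nat.eq_zero_or_pos r with rfl | hr0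
      · simp [walshProj, hε0]
      · have hne : (r : Fin k) ≠ 0 := by
          rw [Ne, Fin.natCast_eq_zero]
          exact Nat.not_dvd_of_pos_of_lt hr0 hrk
        simpa [walshProj, hr0.ne'] using hnc _ hne
    simp only [walshTape, if_neg (show ¬ r + k < k by omega), if_pos (show r + k < 2 * k by omega),
      if_pos hrk, hcast, indicator_single_of_mem (Finset.mem_coe.2 hmem)]
  · simp only [walshTape, if_neg (show ¬ r + k < k by omega),
      if_neg (show ¬ r + k < 2 * k by omega), if_neg hrk, if_pos hr, hcast, walshProj,
      show r ≠ 0 by omega, if_false]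

lemma indicator_walshTape_eq_zero (hnc : ∀ i, i ≠ 0 → εs i = 1 ∨ εs i = 2)
    {n : ℕ} (hn : 1 ≤ n) (hnk : n < k) :
    (({3} : Finset (Fin 4)) : Set (Fin 4)).indicator (walshTape k εs n) = 0 := by
  have hne : (n : Fin k) ≠ 0 := by
    rw [Ne, Fin.natCast_eq_zero]
    exact Nat.not_dvd_of_pos_of_lt hn hnk
  rw [walshTape, if_pos hnk, indicator_single_of_notMem]
  rcases hnc _ hne with h | h <;> simp [h]

lemma sum_norm_sq_walshTape (j : ℕ) :
    ∑ a, ‖walshTape k εs j a‖ ^ 2 = if j < 2 * k then 1 else 1 / 2 := by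
  have hsingle : ∑ a, ‖(Pi.single (εs j) 1 : Fin 4 → ℂ) a‖ ^ 2 = 1 := by
    simp [Pi.single_apply, apply_ite]
  simp only [walshTape,
    apply_ite (fun x : Fin 4 → ℂ => ∑ a, ‖x a‖ ^ 2),
    sum_norm_sq_mulVec_of_mem_unitaryGroup conjTranspose_F4_mem_unitaryGroup,
    sum_norm_sq_indicator_conjTranspose_F4_mulVec_single, hsingle]
  have hcard : ({1, 2} : Finset (Fin 4)).card = 2 := rfl
  split_ifs <;> first | omega | norm_num [hcard]

lemma sum_norm_sq_projHead_window_walshTape {m : ℕ} (hm : m < k) (i : Fin k) :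
    ∑ a, ‖projHead k {3} (window k (walshTape k εs) (k + m)) i a‖ ^ 2
      = if (i : ℕ) = 0 then 1 / 4 else if (i : ℕ) + m < k then 1 else 1 / 2 := by
  by_cases hi : (i : ℕ) = 0
  · simp only [projHead, window, hi, if_true, zero_add, walshTape,
      if_neg (show ¬ k + m < k by omega), if_pos (show k + m < 2 * k by omega),
      sum_norm_sq_indicator_conjTranspose_F4_mulVec_single]
    norm_num
  · simp only [projHead, window, hi, if_false, sum_norm_sq_walshTape]
    congr 1
    exact propext (by omega)

end Tape

lemma prod_fin_ite_quarter_one_half {k m : ℕ} (hm : m < k) :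
    ∏ i : Fin k, (if (i : ℕ) = 0 then (1 / 4 : ℝ) else if (i : ℕ) + m < k then 1 else 1 / 2)
      = 1 / (4 * 2 ^ m) := by
  obtain ⟨n, rfl⟩ : ∃ n, k = n + 1 + m := ⟨k - m - 1, by omega⟩
  rw [Fin.prod_univ_eq_prod_range (fun i => if i = 0 then (1 / 4 : ℝ) else
    if i + m < n + 1 + m then 1 else 1 / 2), Finset.prod_range_add, Finset.prod_range_succ',
    Finset.prod_eq_one fun i hi => by
      rw [if_neg i.succ_ne_zero, if_pos (by simp only [Finset.mem_range] at hi; omega)],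
    Finset.prod_congr rfl fun i _ => by rw [if_neg (by omega), if_neg (by omega)],
    Finset.prod_const, Finset.card_range, if_pos rfl, _root_.one_div_pow]
  field_simp

theorem stmt18 (k : ℕ) (hk : 1 ≤ k)
    (U : Matrix (Fin (4 ^ k)) (Fin (4 ^ k)) ℂ)
    -- U is the Walsh quantization: it shifts the qu4its, applying F₄* to the first one
    (hU : ∀ v : Fin k → Fin 4 → ℂ,
      U.mulVec (tens4 k v)
        = tens4 k (fun i =>
            if h : i.val + 1 < k then v ⟨i.val + 1, h⟩
            else F4.conjTranspose.mulVec (v ⟨0, i.pos⟩)))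
    (εs : Fin k → Fin 4) (hε0 : εs ⟨0, hk⟩ = 0)
    -- ε is a nonclassical state: ε_ℓ ∈ {1, 2} for all 2 ≤ ℓ ≤ k
    (hnc : ∀ ℓ : ℕ, ∀ _h1 : 2 ≤ ℓ, ∀ _h2 : ℓ ≤ k,
      εs ⟨ℓ - 1, by omega⟩ = 1 ∨ εs ⟨ℓ - 1, by omega⟩ = 2) :
    -- t_n |ε⟩ = 0 for all 1 ≤ n ≤ k - 1
    (∀ n : ℕ, 1 ≤ n → n ≤ k - 1 →
      (projDigit k {3} * U * (projDigit k {1, 2} * U) ^ (n - 1)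
        * projDigit k {0}).mulVec (tens4 k (fun i => Pi.single (εs i) 1)) = 0) ∧
    -- ‖t_{k+m} |ε⟩‖² = 1/(4·2^m) for all 0 ≤ m ≤ k - 1
    (∀ m : ℕ, m ≤ k - 1 →
      ∑ j : Fin (4 ^ k),
        ‖(((projDigit k {3} * U * (projDigit k {1, 2} * U) ^ (k + m - 1)
            * projDigit k {0}).mulVec (tens4 k (fun i => Pi.single (εs i) 1))) j)‖ ^ 2
        = 1 / (4 * 2 ^ m)) := by
  have : NeZero k := ⟨by omega⟩
  have hε : εs 0 = 0 := hε0
  have hε' : ∀ i : Fin k, i ≠ 0 → εs i = 1 ∨ εs i = 2 := fun i hi => by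
    have hi0 := Fin.pos_iff_ne_zero.2 hi
    simpa using hnc (i + 1) (by omega) (by omega)
  have ht : ∀ n, 1 ≤ n → n < 2 * k →
      (projDigit k {3} * U * (projDigit k {1, 2} * U) ^ (n - 1) * projDigit k {0}) *ᵥ
        tens4 k (fun i => Pi.single (εs i) 1)
      = tens4 k (projHead k {3} (window k (walshTape k εs) n)) := fun n hn hn2 => by
    rw [← window_walshTape_zero]
    exact mulVec_tens4_window_eq_tens4_projHead hk hU walshProj {1, 2} {3} (fun r => rfl) _ n hn
      fun r hr => walshTape_add_right εs hε hε' (by omega)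
  refine ⟨fun n hn hnk => ?_, fun m hm => ?_⟩
  · rw [ht n hn (by omega)]
    exact tens4_eq_zero_of_eq_zero k _ 0
      (by simpa [projHead, window] using indicator_walshTape_eq_zero εs hε' hn (by omega))
  · rw [ht (k + m) (by omega) (by omega), sum_norm_sq_tens4,
      Finset.prod_congr rfl fun i _ => sum_norm_sq_projHead_window_walshTape εs (by omega) i]
    exact prod_fin_ite_quarter_one_half (by omega)
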